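/- arXiv:1801.10429 — 2 statements merged into one kernel-verified Lean document; each statement's English description precedes it below -/
import Mathlib

section
/- Let L(x) = sqrt(1 - ||x||^2) on the open unit ball B^d, and let g_H be the hyperbolic (Klein model) metric defined by g_H(x)(X,Y) = L(x)^{-2}⟨X,Y⟩ + L(x)^{-4}⟨x,X⟩⟨x,Y⟩. Then the Euclidean Hessian of L satisfies Hess L(x)(X,Y) = -L(x) · g_H(x)(X,Y) for all x in B^d and X, Y in R^d. -/
/-!
With `L = √(1 - ‖·‖²)` we have `dL(y) = -L(y)⁻¹ ⟪y, ·⟫` on the unit ball, and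
`d(L⁻¹)(x) = L(x)⁻³ ⟪x, ·⟫`. Differentiating `y ↦ -L(y)⁻¹ ⟪y, X⟫` by the product rule gives
`Hess L(x)(X, Y) = -L⁻¹ ⟪X, Y⟫ - L⁻³ ⟪x, X⟫⟪x, Y⟫`, which is `-L · g_H(x)(X, Y)`.
-/

open InnerProductSpace

theorem one_sub_norm_sq_pos {E : Type*} [SeminormedAddCommGroup E] {y : E} (hy : ‖y‖ < 1) :
    0 < 1 - ‖y‖ ^ 2 := by
  nlinarith [norm_nonneg y]

theorem sqrt_one_sub_norm_sq_ne_zero {E : Type*} [SeminormedAddCommGroup E] {y : E}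
    (hy : ‖y‖ < 1) : √(1 - ‖y‖ ^ 2) ≠ 0 :=
  (Real.sqrt_pos.mpr (one_sub_norm_sq_pos hy)).ne'

variable {E : Type*} [NormedAddCommGroup E] [InnerProductSpace ℝ E]

theorem hasFDerivAt_one_sub_norm_sq (y : E) :
    HasFDerivAt (fun z : E => 1 - ‖z‖ ^ 2) ((-2 : ℝ) • innerSL ℝ y) y := by
  refine ((hasFDerivAt_const (1 : ℝ) y).sub (hasFDerivAt_id y).norm_sq).congr_fderiv ?_
  ext z
  simp [two_smul]

theorem hasFDerivAt_sqrt_one_sub_norm_sq {y : E} (hy : ‖y‖ < 1) :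
    HasFDerivAt (fun z : E => √(1 - ‖z‖ ^ 2)) (-(√(1 - ‖y‖ ^ 2))⁻¹ • innerSL ℝ y) y := by
  refine ((hasFDerivAt_one_sub_norm_sq y).sqrt (one_sub_norm_sq_pos hy).ne').congr_fderiv ?_
  rw [smul_smul]
  have := sqrt_one_sub_norm_sq_ne_zero hy
  congr 1
  field_simp

theorem hasFDerivAt_neg_inv_sqrt_one_sub_norm_sq {x : E} (hx : ‖x‖ < 1) :
    HasFDerivAt (fun y : E => -(√(1 - ‖y‖ ^ 2))⁻¹)
      ((-(√(1 - ‖x‖ ^ 2))⁻¹ ^ 3) • innerSL ℝ x) x := by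
  refine (((hasDerivAt_inv (sqrt_one_sub_norm_sq_ne_zero hx)).comp_hasFDerivAt x
    (hasFDerivAt_sqrt_one_sub_norm_sq hx)).neg).congr_fderiv ?_
  rw [← neg_smul, smul_smul]
  congr 1
  field_simp

theorem fderiv_sqrt_one_sub_norm_sq_apply_eventuallyEq {x : E} (hx : ‖x‖ < 1) (X : E) :
    (fun y => fderiv ℝ (fun z : E => √(1 - ‖z‖ ^ 2)) y X)
      =ᶠ[nhds x] fun y => -(√(1 - ‖y‖ ^ 2))⁻¹ * ⟪y, X⟫_ℝ := by
  filter_upwards [(isOpen_lt continuous_norm continuous_const).mem_nhds hx] with y hy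
  simp [(hasFDerivAt_sqrt_one_sub_norm_sq hy).fderiv]

theorem hessian_sqrt_one_sub_norm_sq {x : E} (hx : ‖x‖ < 1) (X Y : E) :
    fderiv ℝ (fun y => fderiv ℝ (fun z : E => √(1 - ‖z‖ ^ 2)) y X) x Y =
      -(√(1 - ‖x‖ ^ 2))⁻¹ * ⟪X, Y⟫_ℝ - (√(1 - ‖x‖ ^ 2))⁻¹ ^ 3 * ⟪x, X⟫_ℝ * ⟪x, Y⟫_ℝ := by
  have hinner : HasFDerivAt (fun y : E => ⟪y, X⟫_ℝ) (innerSL ℝ X) x := by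
    convert (innerSL ℝ X).hasFDerivAt (x := x) using 1
    exact funext fun y => real_inner_comm X y
  rw [(fderiv_sqrt_one_sub_norm_sq_apply_eventuallyEq hx X).fderiv_eq,
    HasFDerivAt.fderiv (f := fun y => -(√(1 - ‖y‖ ^ 2))⁻¹ * ⟪y, X⟫_ℝ)
      ((hasFDerivAt_neg_inv_sqrt_one_sub_norm_sq hx).mul hinner)]
  simp only [add_apply, smul_apply, innerSL_apply_apply,
    smul_eq_mul, real_inner_comm Y X]
  ring

/-- With `L y = √(1 - ‖y‖²)` on the open unit ball and the Klein hyperbolic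
metric `g_H(x)(X,Y) = L⁻²⟪X,Y⟫ + L⁻⁴⟪x,X⟫⟪x,Y⟫`, the Euclidean Hessian of `L` satisfies
`Hess L(x)(X,Y) = -L(x) · g_H(x)(X,Y)`. -/
theorem hessian_L_eq_neg_L_mul_hyperbolic_metric (d : ℕ)
    (L : EuclideanSpace ℝ (Fin d) → ℝ)
    (hL : ∀ y, L y = Real.sqrt (1 - ‖y‖ ^ 2))
    (x X Y : EuclideanSpace ℝ (Fin d)) (hx : ‖x‖ < 1) :
    fderiv ℝ (fun y => fderiv ℝ L y X) x Y =
      -(L x) * ((L x)⁻¹ ^ 2 * (inner ℝ X Y : ℝ)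
        + (L x)⁻¹ ^ 4 * (inner ℝ x X : ℝ) * (inner ℝ x Y : ℝ)) := by
  obtain rfl : L = fun y => √(1 - ‖y‖ ^ 2) := funext hL
  have := sqrt_one_sub_norm_sq_ne_zero hx
  rw [hessian_sqrt_one_sub_norm_sq hx]
  field_simp
  ring
end

section
/- Let x, v ∈ R^{d,1} with ⟨x,x⟩_{d,1} = -1, ⟨v,v⟩_{d,1} = 1, ⟨x,v⟩_{d,1} = 0, and x_{d+1} > 0. Let w be a future lightlike vector (⟨w,w⟩_{d,1} = 0) satisfying ⟨x,w⟩_{d,1} = -1. Then -1 ≤ ⟨w,v⟩_{d,1} ≤ 1; moreover ⟨w,v⟩_{d,1} = 1 if and only if w = x + v, and ⟨w,v⟩_{d,1} = -1 if and only if w = x - v. -/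
/-!
Put `t = ⟨w,v⟩` and `u = w - x - t v`. Then `u ⟂ x` and `⟨u,u⟩ = 1 - t²`. The Minkowski form is
positive definite on the orthogonal complement of a timelike vector (a reverse Cauchy–Schwarz
inequality), so `t² ≤ 1`, and `t = ±1` forces `u = 0`, i.e. `w = x ± v`.
-/

/-- The Minkowski bilinear form of signature `(d,1)` on `ℝ^{d+1}`. -/
def mink (d : ℕ) (x y : Fin (d + 1) → ℝ) : ℝ :=
  (∑ i : Fin d, x i.castSucc * y i.castSucc) - x (Fin.last d) * y (Fin.last d)

namespace Mink

variable {d : ℕ}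

theorem comm (a b : Fin (d + 1) → ℝ) : mink d a b = mink d b a := by
  simp [mink, mul_comm]

theorem add_left (a b c : Fin (d + 1) → ℝ) : mink d (a + b) c = mink d a c + mink d b c := by
  simp only [mink, Pi.add_apply, add_mul, Finset.sum_add_distrib]
  ring

theorem sub_left (a b c : Fin (d + 1) → ℝ) : mink d (a - b) c = mink d a c - mink d b c := by
  simp only [mink, Pi.sub_apply, sub_mul, Finset.sum_sub_distrib]
  ring

theorem smul_left (r : ℝ) (a b : Fin (d + 1) → ℝ) : mink d (r • a) b = r * mink d a b := by
  simp only [mink, Pi.smul_apply, smul_eq_mul, mul_assoc, Finset.mul_sum, mul_sub]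

theorem sub_right (a b c : Fin (d + 1) → ℝ) : mink d a (b - c) = mink d a b - mink d a c := by
  simp only [comm a, sub_left]

theorem smul_right (r : ℝ) (a b : Fin (d + 1) → ℝ) : mink d a (r • b) = r * mink d a b := by
  simp only [comm a, smul_left]

theorem self_eq (u : Fin (d + 1) → ℝ) :
    mink d u u = (∑ i : Fin d, u i.castSucc ^ 2) - u (Fin.last d) ^ 2 := by
  simp only [mink, sq]

/-- Reverse Cauchy–Schwarz inequality for a vector `u` orthogonal to `x`. -/
theorem neg_self_mul_sq_last_le_of_orthogonal {x u : Fin (d + 1) → ℝ} (hxu : mink d x u = 0) :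
    -mink d x x * u (Fin.last d) ^ 2 ≤ (∑ i : Fin d, x i.castSucc ^ 2) * mink d u u := by
  have hcs := Finset.sum_mul_sq_le_sq_mul_sq Finset.univ
    (fun i : Fin d => x i.castSucc) (fun i : Fin d => u i.castSucc)
  have hspatial : ∑ i : Fin d, x i.castSucc * u i.castSucc = x (Fin.last d) * u (Fin.last d) := by
    unfold mink at hxu
    linarith
  rw [hspatial] at hcs
  rw [self_eq x, self_eq u]
  linarith

theorem self_nonneg_of_orthogonal {x u : Fin (d + 1) → ℝ} (hx : mink d x x < 0)
    (hxu : mink d x u = 0) : 0 ≤ mink d u u := by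
  have key := neg_self_mul_sq_last_le_of_orthogonal hxu
  have hA : 0 ≤ ∑ i : Fin d, x i.castSucc ^ 2 := by positivity
  have hB : 0 ≤ ∑ i : Fin d, u i.castSucc ^ 2 := by positivity
  by_contra! hneg
  have hlast : u (Fin.last d) ^ 2 = 0 := by nlinarith
  rw [self_eq, hlast] at hneg
  linarith

theorem eq_zero_of_orthogonal_of_self_eq_zero {x u : Fin (d + 1) → ℝ} (hx : mink d x x < 0)
    (hxu : mink d x u = 0) (huu : mink d u u = 0) : u = 0 := by
  have key := neg_self_mul_sq_last_le_of_orthogonal hxu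
  rw [huu, mul_zero] at key
  have hlast : u (Fin.last d) ^ 2 = 0 := by nlinarith [sq_nonneg (u (Fin.last d))]
  have hspatial : ∑ i : Fin d, u i.castSucc ^ 2 = 0 := by
    rw [self_eq] at huu
    linarith
  rw [Finset.sum_eq_zero_iff_of_nonneg fun i _ => sq_nonneg _] at hspatial
  funext i
  induction i using Fin.lastCases with
  | last => exact pow_eq_zero_iff two_ne_zero |>.mp hlast
  | cast i => exact pow_eq_zero_iff two_ne_zero |>.mp (hspatial i (Finset.mem_univ i))

end Mink

open Mink in
theorem lightlike_pairing_bounds_general (d : ℕ) (x v w : Fin (d + 1) → ℝ)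
    (hx : mink d x x = -1) (hv : mink d v v = 1) (hxv : mink d x v = 0)
    (hw : mink d w w = 0) (hxw : mink d x w = -1) :
    (-1 ≤ mink d w v ∧ mink d w v ≤ 1) ∧
      (mink d w v = 1 ↔ w = x + v) ∧
      (mink d w v = -1 ↔ w = x - v) := by
  set t := mink d w v with ht
  set u := w - x - t • v
  have htimelike : mink d x x < 0 := by linarith
  have hxu : mink d x u = 0 := by
    simp only [u, sub_right, smul_right, hx, hxv, hxw]
    ring
  have huu : mink d u u = 1 - t ^ 2 := by
    simp only [u, sub_left, sub_right, smul_left, smul_right, comm w x, comm v x, comm v w,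
      hx, hv, hw, hxv, hxw, ← ht]
    ring
  have hpos := self_nonneg_of_orthogonal htimelike hxu
  have hw_eq (h : t ^ 2 = 1) : w = x + t • v := by
    have hu0 : w - (x + t • v) = 0 := by
      rw [← sub_sub]
      exact eq_zero_of_orthogonal_of_self_eq_zero htimelike hxu (by rw [huu, h, sub_self])
    exact sub_eq_zero.mp hu0
  refine ⟨⟨by nlinarith, by nlinarith⟩, ⟨fun h => ?_, ?_⟩, ⟨fun h => ?_, ?_⟩⟩
  · simpa [h] using hw_eq (by rw [h]; norm_num)
  · rintro rfl
    rw [ht, add_left, hxv, hv, zero_add]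
  · simpa [h, sub_eq_add_neg] using hw_eq (by rw [h]; norm_num)
  · rintro rfl
    rw [ht, sub_left, hxv, hv, zero_sub]

/-- For a future unit timelike `x`, a unit spacelike `v` orthogonal to `x`,
and a lightlike `w` with `⟨x,w⟩ = -1`, one has `-1 ≤ ⟨w,v⟩ ≤ 1`, with
`⟨w,v⟩ = 1 ↔ w = x + v` and `⟨w,v⟩ = -1 ↔ w = x - v`. -/
theorem lightlike_pairing_bounds (d : ℕ) (x v w : Fin (d + 1) → ℝ)
    (hx : mink d x x = -1) (hv : mink d v v = 1) (hxv : mink d x v = 0)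
    (hfut : 0 < x (Fin.last d))
    (hw : mink d w w = 0) (hxw : mink d x w = -1) :
    (-1 ≤ mink d w v ∧ mink d w v ≤ 1) ∧
      (mink d w v = 1 ↔ w = x + v) ∧
      (mink d w v = -1 ↔ w = x - v) :=
  lightlike_pairing_bounds_general d x v w hx hv hxv hw hxw
end
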